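/- arXiv:math/0508531 — 8 statements merged into one kernel-verified Lean document; each statement's English description precedes it below -/
import Mathlib

section
/- Let C be a category with pullbacks and let F : C ⥤ C be an endofunctor that sends pullback squares to weak pullback squares. Then for any F-coalgebras (A,α), (B,β), (C',γ) and any coalgebra morphisms φ : (A,α) ⟶ (C',γ) and ψ : (B,β) ⟶ (C',γ), there exist an F-coalgebra (P,χ) and coalgebra morphisms μ : (P,χ) ⟶ (A,α) and ν : (P,χ) ⟶ (B,β) with φ ∘ μ = ψ ∘ ν, such that the underlying commuting square in C (with sides the underlying morphisms of μ, ν, φ, ψ) is a pullback square. -/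
/-!
The underlying pullback `P` of `φ` and `ψ` in `C` already carries a coalgebra structure: the maps
`P → A → F A` and `P → B → F B` form a commuting square over `F φ` and `F ψ`, so they factor
through `F P`, which is a weak pullback of `F φ` and `F ψ`. Any such factorisation `χ : P → F P`
makes both projections coalgebra morphisms.
-/

open CategoryTheory CategoryTheory.Limits

universe v u

/-- A commuting square `fst ≫ f = snd ≫ g` is a *weak pullback* if every other commuting
square over the cospan `f, g` factors (not necessarily uniquely) through it. -/
def IsWeakPullback {C : Type u} [Category.{v} C] {W X Y Z : C}
    (fst : W ⟶ X) (snd : W ⟶ Y) (f : X ⟶ Z) (g : Y ⟶ Z) : Prop :=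
  fst ≫ f = snd ≫ g ∧
    ∀ {T : C} (h : T ⟶ X) (k : T ⟶ Y), h ≫ f = k ≫ g →
      ∃ l : T ⟶ W, l ≫ fst = h ∧ l ≫ snd = k

namespace CategoryTheory.Endofunctor.Coalgebra

variable {C : Type u} [Category.{v} C] {F : C ⥤ C} {A B D : Coalgebra F}

theorem str_comp_map_comm {W : C} {fst : W ⟶ A.V} {snd : W ⟶ B.V} {φ : A ⟶ D} {ψ : B ⟶ D}
    (w : fst ≫ φ.f = snd ≫ ψ.f) :
    (fst ≫ A.str) ≫ F.map φ.f = (snd ≫ B.str) ≫ F.map ψ.f := by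
  rw [Category.assoc, Category.assoc, φ.h, ψ.h, ← Category.assoc, ← Category.assoc, w]

theorem exists_str_of_isWeakPullback {W : C} {fst : W ⟶ A.V} {snd : W ⟶ B.V}
    {φ : A ⟶ D} {ψ : B ⟶ D} (w : fst ≫ φ.f = snd ≫ ψ.f)
    (hw : IsWeakPullback (F.map fst) (F.map snd) (F.map φ.f) (F.map ψ.f)) :
    ∃ χ : W ⟶ F.obj W, χ ≫ F.map fst = fst ≫ A.str ∧ χ ≫ F.map snd = snd ≫ B.str :=
  hw.2 _ _ (str_comp_map_comm w)

end CategoryTheory.Endofunctor.Coalgebra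

theorem coalgebra_weak_pullback
    {C : Type u} [Category.{v} C] [HasPullbacks C] (F : C ⥤ C)
    (hF : ∀ {W X Y Z : C} (fst : W ⟶ X) (snd : W ⟶ Y) (f : X ⟶ Z) (g : Y ⟶ Z),
      IsPullback fst snd f g → IsWeakPullback (F.map fst) (F.map snd) (F.map f) (F.map g))
    (Aα Bβ Cγ : Endofunctor.Coalgebra F) (φ : Aα ⟶ Cγ) (ψ : Bβ ⟶ Cγ) :
    ∃ (Pχ : Endofunctor.Coalgebra F) (μ : Pχ ⟶ Aα) (ν : Pχ ⟶ Bβ),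
      μ ≫ φ = ν ≫ ψ ∧ IsPullback μ.f ν.f φ.f ψ.f := by
  have hpb := IsPullback.of_hasPullback φ.f ψ.f
  obtain ⟨χ, hfst, hsnd⟩ :=
    Endofunctor.Coalgebra.exists_str_of_isWeakPullback hpb.w (hF _ _ _ _ hpb)
  exact ⟨⟨_, χ⟩, ⟨_, hfst⟩, ⟨_, hsnd⟩, Endofunctor.Coalgebra.Hom.ext hpb.w, hpb⟩
end

section
/- Let C be a category with finite limits in which the pullback of a regular epimorphism along any morphism is again a regular epimorphism, and let F : C ⥤ C be an endofunctor sending pullback squares to weak pullback squares. Suppose: (i) (G,γ) is a weakly terminal F-coalgebra, i.e. every F-coalgebra admits at least one coalgebra morphism to (G,γ); (ii) λ, ρ : (B,β) ⟶ (G,γ) are coalgebra morphisms forming a weakly terminal bisimulation, i.e. for every F-coalgebra (P,π) and every pair of coalgebra morphisms s, t : (P,π) ⟶ (G,γ) there exists a coalgebra morphism χ : (P,π) ⟶ (B,β) with λ ∘ χ = s and ρ ∘ χ = t; (iii) q : (G,γ) ⟶ (T,τ) is a coalgebra morphism with q ∘ λ = q ∘ ρ whose underlying morphism in C is a coequalizer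 of the underlying morphisms of λ and ρ. Then (T,τ) is a terminal object in the category of F-coalgebras. -/
open CategoryTheory CategoryTheory.Limits

universe v u

theorem terminal_coalgebra_of_coequalizer_of_weakly_terminal_bisimulation
    {C : Type u} [Category.{v} C] [HasFiniteLimits C] (F : C ⥤ C)
    -- regular epimorphisms are stable under pullback:
    (hreg : ∀ {P X Y Z : C} (fst : P ⟶ X) (snd : P ⟶ Y) (f : X ⟶ Z) (g : Y ⟶ Z),
      IsPullback fst snd f g → RegularEpi g → Nonempty (RegularEpi fst))
    -- `F` sends pullback squares to weak pullback squares: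
    (hF : ∀ {W X Y Z : C} (fst : W ⟶ X) (snd : W ⟶ Y) (f : X ⟶ Z) (g : Y ⟶ Z),
      IsPullback fst snd f g → IsWeakPullback (F.map fst) (F.map snd) (F.map f) (F.map g))
    (Gγ Bβ Tτ : Endofunctor.Coalgebra F)
    -- (i) `Gγ` is a weakly terminal coalgebra:
    (hG : ∀ Aα : Endofunctor.Coalgebra F, Nonempty (Aα ⟶ Gγ))
    (lam rho : Bβ ⟶ Gγ)
    -- (ii) `(Bβ, lam, rho)` is a weakly terminal bisimulation on `Gγ`:
    (hB : ∀ (Pπ : Endofunctor.Coalgebra F) (s t : Pπ ⟶ Gγ),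
      ∃ χ : Pπ ⟶ Bβ, χ ≫ lam = s ∧ χ ≫ rho = t)
    -- (iii) `q` is a coalgebra morphism whose underlying map coequalizes `lam.f` and `rho.f`:
    (q : Gγ ⟶ Tτ) (w : lam.f ≫ q.f = rho.f ≫ q.f)
    (hq : Nonempty (IsColimit (Cofork.ofπ q.f w))) :
    Nonempty (IsTerminal Tτ) := by
  obtain ⟨hqc⟩ := hq
  -- any two coalgebra morphisms into `Gγ` become equal after composing with `q`
  have key : ∀ (Pπ : Endofunctor.Coalgebra F) (s t : Pπ ⟶ Gγ), s ≫ q = t ≫ q := by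
    intro Pπ s t
    obtain ⟨χ, hs, ht⟩ := hB Pπ s t
    have hlr : lam ≫ q = rho ≫ q := by
      apply Endofunctor.Coalgebra.Hom.ext
      exact w
    rw [← hs, ← ht, Category.assoc, Category.assoc, hlr]
  refine ⟨IsTerminal.ofUniqueHom (fun Aα => (hG Aα).some ≫ q) ?_⟩
  intro Aα m
  -- pull back `m.f` along `q.f`
  set fst := pullback.fst (f := m.f) (g := q.f) with hfst
  set snd := pullback.snd (f := m.f) (g := q.f) with hsnd
  have isPB : IsPullback fst snd m.f q.f := IsPullback.of_hasPullback m.f q.f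
  haveI : RegularEpi q.f := ⟨Bβ.V, lam.f, rho.f, w, hqc⟩
  obtain ⟨re⟩ := hreg fst snd m.f q.f isPB this
  haveI := re
  haveI : Epi fst := RegularEpi.epi fst re
  -- coalgebra structure on the pullback, via the weak pullback property
  obtain ⟨_, lift⟩ := hF fst snd m.f q.f isPB
  have hcomm : (fst ≫ Aα.str) ≫ F.map m.f = (snd ≫ Gγ.str) ≫ F.map q.f := by
    rw [Category.assoc, Endofunctor.Coalgebra.Hom.h, Category.assoc,
      Endofunctor.Coalgebra.Hom.h, ← Category.assoc, ← Category.assoc,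
      pullback.condition]
  obtain ⟨π, hπ₁, hπ₂⟩ := lift (fst ≫ Aα.str) (snd ≫ Gγ.str) hcomm
  let Pc : Endofunctor.Coalgebra F := ⟨pullback m.f q.f, π⟩
  let fstHom : Pc ⟶ Aα := ⟨fst, hπ₁⟩
  let sndHom : Pc ⟶ Gγ := ⟨snd, hπ₂⟩
  -- compare the two coalgebra morphisms `Pc ⟶ Gγ`
  have := key Pc (fstHom ≫ (hG Aα).some) sndHom
  have hf : fst ≫ ((hG Aα).some ≫ q).f = fst ≫ m.f := by
    have h1 : ((fstHom ≫ (hG Aα).some) ≫ q).f = (sndHom ≫ q).f := by rw [this]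
    simp only [Endofunctor.Coalgebra.comp_f] at h1 ⊢
    calc fst ≫ (hG Aα).some.f ≫ q.f = snd ≫ q.f := by
          simpa [Category.assoc] using h1
      _ = fst ≫ m.f := pullback.condition.symm
  apply Endofunctor.Coalgebra.Hom.ext
  exact ((cancel_epi fst).mp hf.symm)
end

section
/- Let κ : Cardinal.{u} be an infinite regular cardinal. Then the κ-powerclass functor on Type u has a final coalgebra: there exist a type V : Type u and a function E : V → {S : Set V // #S ≤ κ} such that for every X : Type u and every α : X → {S : Set X // #S ≤ κ} there exists a unique c : X → V satisfying (E (c x)).val = c '' (α x).val for all x : X. -/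
open Cardinal

universe u

namespace PowerclassFinal

variable (κ : Cardinal.{u})

def Pk (X : Type u) : Type u := {S : Set X // #S ≤ κ}

instance : Functor (Pk κ) where
  map f S := ⟨f '' S.1, (Cardinal.mk_image_le).trans S.2⟩

noncomputable def reprAux {α : Type u} (S : Pk κ α) : ↥S.1 ↪ κ.out :=
  Classical.choice ((Cardinal.le_def _ _).mp (S.2.trans_eq (Cardinal.mk_out κ).symm))

noncomputable instance : QPF (Pk κ) where
  P := ⟨Set κ.out, fun s => ↥s⟩
  abs {α} p := ⟨Set.range p.2,
    (Cardinal.mk_range_le).trans ((Cardinal.mk_set_le p.1).trans_eq (Cardinal.mk_out κ))⟩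
  repr {α} S :=
    ⟨Set.range ⇑(reprAux κ S),
      fun y => ((Equiv.ofInjective _ (reprAux κ S).injective).symm y).val⟩
  abs_repr {α} S := by
    apply Subtype.ext
    dsimp only
    ext z
    constructor
    · rintro ⟨y, rfl⟩
      exact ((Equiv.ofInjective _ _).symm y).2
    · intro hz
      exact ⟨Equiv.ofInjective _ (reprAux κ S).injective ⟨z, hz⟩, by simp⟩
  abs_map {α β} f p := by
    rcases p with ⟨a, g⟩
    apply Subtype.ext
    show Set.range (f ∘ g) = f '' Set.range g
    rw [Set.range_comp]

end PowerclassFinal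

theorem powerclass_has_final_coalgebra (κ : Cardinal.{u}) (hκ : κ.IsRegular) :
    ∃ (V : Type u) (E : V → {S : Set V // #S ≤ κ}),
      ∀ (X : Type u) (α : X → {S : Set X // #S ≤ κ}),
        ∃! c : X → V, ∀ x : X, (E (c x)).val = c '' (α x).val := by
  classical
  refine ⟨QPF.Cofix (PowerclassFinal.Pk κ), QPF.Cofix.dest, fun X α => ?_⟩
  refine ⟨QPF.Cofix.corec α, fun x => ?_, fun c' hc' => ?_⟩
  · erw [QPF.Cofix.dest_corec]; rfl
  · -- uniqueness: bisimulation between c' and corec α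
    funext x
    have key : ∀ (c₁ c₂ : X → QPF.Cofix (PowerclassFinal.Pk κ)),
        (∀ x, (QPF.Cofix.dest (c₁ x)).val = c₁ '' (α x).val) →
        (∀ x, (QPF.Cofix.dest (c₂ x)).val = c₂ '' (α x).val) →
        ∀ x, c₁ x = c₂ x := by
      intro c₁ c₂ h₁ h₂ x
      let r : QPF.Cofix (PowerclassFinal.Pk κ) → QPF.Cofix (PowerclassFinal.Pk κ) → Prop :=
        fun v w => ∃ y, v = c₁ y ∧ w = c₂ y
      refine QPF.Cofix.bisim_rel r ?_ _ _ ⟨x, rfl, rfl⟩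
      rintro v w ⟨y, rfl, rfl⟩
      apply Subtype.ext
      show Quot.mk r '' (QPF.Cofix.dest (c₁ y)).val = Quot.mk r '' (QPF.Cofix.dest (c₂ y)).val
      rw [h₁, h₂, ← Set.image_comp, ← Set.image_comp]
      apply Set.image_congr
      intro z _
      exact Quot.sound ⟨z, rfl, rfl⟩
    exact key c' (QPF.Cofix.corec α)
      hc' (fun y => by erw [QPF.Cofix.dest_corec]; rfl) x
end

section
/- Let κ be an infinite cardinal, V : Type u, and E : V ≃ {S : Set V // #S ≤ κ} a bijection (a fixpoint of the κ-powerclass functor). Define the membership relation x ε y to mean x ∈ (E y).val. Then (V, ε) satisfies the following set-theoretic axioms: Extensionality: for all a b : V, if (∀ x, x ε a ↔ x ε b) then a = b; Pairing: for all x y : V there exists t with ∀ z, z ε t ↔ (z = x ∨ z = y); Union: for all x there exists t with ∀ z, z ε t ↔ ∃ y, z ε y ∧ y ε x; Empty set: there exists x with ∀ z, ¬(z ε x); Binary Intersection: for all a b there exists t with ∀ z, z ε t ↔ (z ε a ∧ z ε b); Replacement: for every relation φ : V → V → Prop and every a : V, if for every x with x ε a there exists a unique y with φ x y, then there exists t such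 that ∀ y, y ε t ↔ ∃ x, x ε a ∧ φ x y. -/
/-!
`E` realises every set of size at most `κ` as the extension of some element of `V`, and is
injective, so extensionality holds and each of the other axioms reduces to a cardinality bound:
a pair is finite, hence of size `≤ ℵ₀ ≤ κ`; a `κ`-indexed union of sets of size `≤ κ` has size
`≤ κ * κ = κ`; an intersection is a subset of a small set; and the image of a small set under a
functional relation is no larger than the set.
-/

open Cardinal Set

universe u

namespace Cardinal

theorem mk_biUnion_le_of_forall_le {α ι : Type u} {κ : Cardinal.{u}} (hκ : ℵ₀ ≤ κ)
    {s : Set ι} {A : ι → Set α} (hs : #s ≤ κ) (hA : ∀ i ∈ s, #(A i) ≤ κ) :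
    #(⋃ i ∈ s, A i) ≤ κ :=
  calc #(⋃ i ∈ s, A i) ≤ #s * ⨆ i : s, #(A i) := mk_biUnion_le A s
    _ ≤ κ * κ := mul_le_mul' hs (ciSup_le' fun i => hA i i.2)
    _ = κ := mul_eq_self hκ

theorem mk_setOf_exists_rel_le {α β : Type u} {s : Set α} {r : α → β → Prop}
    (hr : ∀ x ∈ s, ∃! y, r x y) : #{y | ∃ x ∈ s, r x y} ≤ #s := by
  choose f hf hf_unique using hr
  have h_sub : {y | ∃ x ∈ s, r x y} ⊆ range fun x : s => f x x.2 := by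
    rintro y ⟨x, hx, hxy⟩
    exact ⟨⟨x, hx⟩, (hf_unique x hx y hxy).symm⟩
  exact (mk_le_mk_of_subset h_sub).trans mk_range_le

end Cardinal

theorem Equiv.exists_mem_iff_of_mk_le {κ : Cardinal.{u}} {V : Type u}
    (E : V ≃ {S : Set V // #S ≤ κ}) {S : Set V} {p : V → Prop} (hS : #S ≤ κ)
    (hp : ∀ z, z ∈ S ↔ p z) : ∃ t, ∀ z, z ∈ (E t).val ↔ p z :=
  ⟨E.symm ⟨S, hS⟩, by simpa using hp⟩

theorem powerclass_fixpoint_models_CZF₀ (κ : Cardinal.{u}) (hκ : ℵ₀ ≤ κ)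
    (V : Type u) (E : V ≃ {S : Set V // #S ≤ κ}) :
    -- Extensionality
    (∀ a b : V, (∀ x : V, x ∈ (E a).val ↔ x ∈ (E b).val) → a = b) ∧
    -- Pairing
    (∀ x y : V, ∃ t : V, ∀ z : V, z ∈ (E t).val ↔ (z = x ∨ z = y)) ∧
    -- Union
    (∀ x : V, ∃ t : V, ∀ z : V, z ∈ (E t).val ↔ ∃ y : V, z ∈ (E y).val ∧ y ∈ (E x).val) ∧
    -- Emptyset
    (∃ x : V, ∀ z : V, ¬ z ∈ (E x).val) ∧
    -- Binary intersection
    (∀ a b : V, ∃ t : V, ∀ z : V, z ∈ (E t).val ↔ (z ∈ (E a).val ∧ z ∈ (E b).val)) ∧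
    -- Replacement
    (∀ (φ : V → V → Prop) (a : V), (∀ x : V, x ∈ (E a).val → ∃! y : V, φ x y) →
      ∃ t : V, ∀ y : V, y ∈ (E t).val ↔ ∃ x : V, x ∈ (E a).val ∧ φ x y) := by
  refine ⟨fun a b h => E.injective (Subtype.ext (Set.ext h)), fun x y => ?_, fun x => ?_, ?_,
    fun a b => ?_, fun φ a hφ => ?_⟩
  · exact E.exists_mem_iff_of_mk_le ((toFinite {x, y}).lt_aleph0.le.trans hκ) (fun z => Iff.rfl)
  · exact E.exists_mem_iff_of_mk_le
      (mk_biUnion_le_of_forall_le hκ (E x).prop fun y _ => (E y).prop) (by simp [and_comm])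
  · simpa using E.exists_mem_iff_of_mk_le (S := ∅) (by simp) (fun _ => Iff.rfl)
  · exact E.exists_mem_iff_of_mk_le ((mk_le_mk_of_subset inter_subset_left).trans (E a).prop)
      (fun _ => Iff.rfl)
  · exact E.exists_mem_iff_of_mk_le ((mk_setOf_exists_rel_le hφ).trans (E a).prop)
      (fun _ => Iff.rfl)
end

section
/- Let κ be an infinite cardinal, V : Type u, and E : V ≃ {S : Set V // #S ≤ κ} a bijection, with membership x ε y := x ∈ (E y).val. Let ∅' := E.symm ⟨∅, _⟩ (the name of the empty subset) and, for x : V, let s x := E.symm ⟨(E x).val ∪ {x}, _⟩ (the name of (E x).val ∪ {x}, which has cardinality at most κ since κ is infinite). Then there exists w : V such that: (Infinity-1) ∅' ε w and for all x, x ε w implies s x ε w; and (Infinity-2) for every predicate ψ : V → Prop, if ψ ∅' and (for all x, x ε w → ψ x → ψ (s x)), then for all x, x ε w implies ψ x. -/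
open Cardinal

universe u

/-- The name of the empty subset of `V` in a fixpoint `E` of the κ-powerclass functor. -/
noncomputable def emptyName {κ : Cardinal.{u}} {V : Type u}
    (E : V ≃ {S : Set V // #S ≤ κ}) : V :=
  E.symm ⟨∅, by simp⟩

/-- The successor operation `x ↦ (E x).val ∪ {x}` in a fixpoint `E` of the κ-powerclass
functor, for an infinite cardinal `κ`. -/
noncomputable def succName {κ : Cardinal.{u}} (hκ : ℵ₀ ≤ κ) {V : Type u}
    (E : V ≃ {S : Set V // #S ≤ κ}) (x : V) : V :=
  E.symm ⟨(E x).val ∪ {x}, by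
    refine le_trans (mk_union_le _ _) (Cardinal.add_le_of_le hκ (E x).2 ?_)
    simpa using le_trans Cardinal.one_le_aleph0 hκ⟩

/-! The iterates `∅', s ∅', s (s ∅'), …` form a countable, hence κ-small, set; its name is the
witness `w`, and Infinity-2 is induction along the iteration. -/

section IterateOrbit

variable {α : Type*} (f : α → α) (a : α)

theorem self_mem_range_iterate : a ∈ Set.range (fun n => f^[n] a) :=
  ⟨0, rfl⟩

variable {f a} in
theorem apply_mem_range_iterate {x : α} (hx : x ∈ Set.range (fun n => f^[n] a)) :
    f x ∈ Set.range (fun n => f^[n] a) := by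
  obtain ⟨n, rfl⟩ := hx
  exact ⟨n + 1, Function.iterate_succ_apply' f n a⟩

theorem range_iterate_induction (ψ : α → Prop) (h₀ : ψ a)
    (hsucc : ∀ x ∈ Set.range (fun n => f^[n] a), ψ x → ψ (f x)) :
    ∀ x ∈ Set.range (fun n => f^[n] a), ψ x := by
  rintro _ ⟨n, rfl⟩
  induction n with
  | zero => exact h₀
  | succ n ih =>
    simpa only [Function.iterate_succ_apply'] using hsucc _ ⟨n, rfl⟩ ih

end IterateOrbit

theorem powerclass_fixpoint_models_infinity (κ : Cardinal.{u}) (hκ : ℵ₀ ≤ κ)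
    (V : Type u) (E : V ≃ {S : Set V // #S ≤ κ}) :
    ∃ w : V,
      -- Infinity-1
      (emptyName E ∈ (E w).val ∧ ∀ x : V, x ∈ (E w).val → succName hκ E x ∈ (E w).val) ∧
      -- Infinity-2
      (∀ ψ : V → Prop, ψ (emptyName E) →
        (∀ x : V, x ∈ (E w).val → ψ x → ψ (succName hκ E x)) →
        ∀ x : V, x ∈ (E w).val → ψ x) := by
  set ω := Set.range (fun n => (succName hκ E)^[n] (emptyName E))
  have hω : #ω ≤ κ := (Set.countable_range _).le_aleph0.trans hκ
  refine ⟨E.symm ⟨ω, hω⟩, ?_⟩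
  rw [Equiv.apply_symm_apply]
  exact ⟨⟨self_mem_range_iterate _ _, fun _ => apply_mem_range_iterate⟩,
    range_iterate_induction _ _⟩
end

section
/- Let κ be an infinite cardinal, X : Type u, and α : X → Set X a function with #(α x) ≤ κ for every x : X. Then for every a : X there exists a least subset S ⊆ X such that a ∈ S and S is closed under α (i.e. for all x ∈ S, α x ⊆ S): S is contained in every subset of X containing a and closed under α. Moreover this least subcoalgebra S has cardinality #S ≤ κ. -/
/-!
The least closed set containing `s` is the union of the chain `s ⊆ s ∪ α[s] ⊆ ⋯`. Each stage
has cardinality at most `κ` because `κ + κ * κ = κ`, and so does the union because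
`ℵ₀ * κ = κ`.
-/

open Cardinal Set

universe u

theorem Cardinal.mk_iUnion_nat_le {X : Type u} {κ : Cardinal.{u}} (hκ : ℵ₀ ≤ κ)
    {f : ℕ → Set X} (hf : ∀ n, #(f n) ≤ κ) : #(⋃ n, f n) ≤ κ :=
  calc #(⋃ n, f n) ≤ lift.{u} #ℕ * ⨆ n, lift.{0} #(f n) := by
        simpa only [lift_id'] using mk_iUnion_le_lift f
    _ ≤ ℵ₀ * κ := by
        gcongr
        · simp
        · exact ciSup_le' fun n => by simpa using hf n
    _ = κ := aleph0_mul_eq hκ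

section GeneratedSet

variable {X : Type u} (α : X → Set X)

def expand (s : Set X) : Set X := s ∪ ⋃ x ∈ s, α x

def generatedBy (s : Set X) : Set X := ⋃ n, (expand α)^[n] s

variable {α}

theorem subset_expand (s : Set X) : s ⊆ expand α s := subset_union_left

theorem expand_subset {s T : Set X} (hs : s ⊆ T) (hT : ∀ x ∈ T, α x ⊆ T) :
    expand α s ⊆ T :=
  union_subset hs (iUnion₂_subset fun x hx => hT x (hs hx))

theorem mk_expand_le {κ : Cardinal.{u}} (hκ : ℵ₀ ≤ κ) {s : Set X} (hs : #s ≤ κ)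
    (hα : ∀ x ∈ s, #(α x) ≤ κ) : #(expand α s) ≤ κ := by
  have hstep : #(⋃ x ∈ s, α x) ≤ κ :=
    calc #(⋃ x ∈ s, α x) ≤ #s * ⨆ x : s, #(α x) := mk_biUnion_le α s
      _ ≤ κ * κ := by gcongr; exact ciSup_le' fun x => hα x x.2
      _ = κ := mul_eq_self hκ
  calc #(expand α s) ≤ #s + #(⋃ x ∈ s, α x) := mk_union_le _ _
    _ ≤ κ + κ := add_le_add hs hstep
    _ = κ := add_eq_self hκ

theorem subset_generatedBy (s : Set X) : s ⊆ generatedBy α s :=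
  subset_iUnion (fun n => (expand α)^[n] s) 0

theorem generatedBy_closed {s : Set X} : ∀ x ∈ generatedBy α s, α x ⊆ generatedBy α s := by
  intro x hx
  obtain ⟨n, hn⟩ := mem_iUnion.1 hx
  refine Subset.trans ?_ (subset_iUnion _ (n + 1))
  rw [Function.iterate_succ_apply']
  exact subset_union_of_subset_right (subset_biUnion_of_mem hn) _

theorem generatedBy_subset {s T : Set X} (hs : s ⊆ T) (hT : ∀ x ∈ T, α x ⊆ T) :
    generatedBy α s ⊆ T := by
  refine iUnion_subset fun n => ?_
  induction n with
  | zero => exact hs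
  | succ n ih => rw [Function.iterate_succ_apply']; exact expand_subset ih hT

theorem mk_generatedBy_le {κ : Cardinal.{u}} (hκ : ℵ₀ ≤ κ) {s : Set X} (hs : #s ≤ κ)
    (hα : ∀ x, #(α x) ≤ κ) : #(generatedBy α s) ≤ κ := by
  refine mk_iUnion_nat_le hκ fun n => ?_
  induction n with
  | zero => exact hs
  | succ n ih =>
    rw [Function.iterate_succ_apply']
    exact mk_expand_le hκ ih fun x _ => hα x

end GeneratedSet

theorem generated_subcoalgebra_powerclass (κ : Cardinal.{u}) (hκ : ℵ₀ ≤ κ)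
    (X : Type u) (α : X → Set X) (hα : ∀ x : X, #(α x) ≤ κ) (a : X) :
    ∃ S : Set X,
      (a ∈ S ∧ ∀ x ∈ S, α x ⊆ S) ∧
      (∀ T : Set X, a ∈ T → (∀ x ∈ T, α x ⊆ T) → S ⊆ T) ∧
      #S ≤ κ := by
  have ha : #({a} : Set X) ≤ κ := by
    simpa using one_le_aleph0.trans hκ
  exact ⟨generatedBy α {a}, ⟨subset_generatedBy _ rfl, generatedBy_closed⟩,
    fun T haT hT => generatedBy_subset (singleton_subset_iff.2 haT) hT,
    mk_generatedBy_le hκ ha hα⟩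
end

section
/- Let κ be an infinite cardinal and let P be a polynomial functor given by A : Type u and B : A → Type u with #(B a) ≤ κ for every a : A. Let X : Type u and f : X → Σ a : A, (B a → X) be a P-coalgebra. Then for every x₀ : X there exists a least subset S ⊆ X such that x₀ ∈ S and S is closed under the coalgebra (i.e. for all x ∈ S and all b : B (f x).1, (f x).2 b ∈ S): S is contained in every subset of X containing x₀ and closed under f. Moreover this least subcoalgebra S has cardinality #S ≤ κ. -/
/-!
The subcoalgebra generated by `x₀` is the set of points reachable from `x₀` by repeatedly
passing to children. It is the union of the stages `{x₀}, children of {x₀}, …`; every point has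
at most `κ` children, so by induction each stage has at most `κ` elements, and a countable union
of sets of size at most `κ` again has size at most `κ` because `ℵ₀ ≤ κ`.
-/

open Cardinal

universe u

namespace Cardinal

theorem mk_biUnion_le_of_aleph0_le {X : Type u} {κ : Cardinal.{u}} (hκ : ℵ₀ ≤ κ)
    {s : Set X} (hs : #s ≤ κ) {N : X → Set X} (hN : ∀ x, #(N x) ≤ κ) :
    #(⋃ x ∈ s, N x) ≤ κ :=
  (mk_biUnion_le N s).trans <| mul_le_of_le hκ hs <| ciSup_le' fun x => hN x

theorem mk_iUnion_nat_le_of_aleph0_le {X : Type u} {κ : Cardinal.{u}} (hκ : ℵ₀ ≤ κ)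
    {t : ℕ → Set X} (ht : ∀ n, #(t n) ≤ κ) :
    #(⋃ n, t n) ≤ κ := by
  have := mk_iUnion_le_lift.{u, 0} t
  simp only [lift_uzero, mk_nat, lift_aleph0] at this
  exact this.trans <| mul_le_of_le hκ hκ <| ciSup_le' ht

end Cardinal

namespace Set

variable {X : Type u} (N : X → Set X)

def reachableSet (s : Set X) : Set X :=
  ⋃ n, (fun t => ⋃ x ∈ t, N x)^[n] s

variable {N}

theorem subset_reachableSet (s : Set X) : s ⊆ reachableSet N s :=
  subset_iUnion (fun n => (fun t => ⋃ x ∈ t, N x)^[n] s) 0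

theorem subset_reachableSet_of_mem {s : Set X} {x : X} (hx : x ∈ reachableSet N s) :
    N x ⊆ reachableSet N s := by
  obtain ⟨n, hn⟩ := mem_iUnion.1 hx
  intro y hy
  refine mem_iUnion.2 ⟨n + 1, ?_⟩
  rw [Function.iterate_succ_apply']
  exact mem_biUnion hn hy

theorem reachableSet_subset {s T : Set X} (hsT : s ⊆ T) (hT : ∀ x ∈ T, N x ⊆ T) :
    reachableSet N s ⊆ T := by
  refine iUnion_subset fun n => ?_
  induction n with
  | zero => exact hsT
  | succ n ih =>
    rw [Function.iterate_succ_apply']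
    exact iUnion₂_subset fun x hx => hT x (ih hx)

theorem mk_reachableSet_le {κ : Cardinal.{u}} (hκ : ℵ₀ ≤ κ) {s : Set X} (hs : #s ≤ κ)
    (hN : ∀ x, #(N x) ≤ κ) : #(reachableSet N s) ≤ κ := by
  refine mk_iUnion_nat_le_of_aleph0_le hκ fun n => ?_
  induction n with
  | zero => exact hs
  | succ n ih =>
    rw [Function.iterate_succ_apply']
    exact mk_biUnion_le_of_aleph0_le hκ ih hN

end Set

open Set in
theorem generated_subcoalgebra_polynomial (κ : Cardinal.{u}) (hκ : ℵ₀ ≤ κ)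
    (P : PFunctor.{u}) (hB : ∀ a : P.A, #(P.B a) ≤ κ)
    (X : Type u) (f : X → Σ a : P.A, P.B a → X) (x₀ : X) :
    ∃ S : Set X,
      (x₀ ∈ S ∧ ∀ x ∈ S, ∀ b : P.B (f x).1, (f x).2 b ∈ S) ∧
      (∀ T : Set X, x₀ ∈ T → (∀ x ∈ T, ∀ b : P.B (f x).1, (f x).2 b ∈ T) → S ⊆ T) ∧
      #S ≤ κ := by
  let children (x : X) : Set X := range (f x).2
  refine ⟨reachableSet children {x₀}, ⟨subset_reachableSet _ rfl, fun x hx b => ?_⟩,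
    fun T hx₀ hT => ?_, ?_⟩
  · exact range_subset_iff.1 (subset_reachableSet_of_mem hx) b
  · exact reachableSet_subset (singleton_subset_iff.2 hx₀) fun x hx => range_subset_iff.2 (hT x hx)
  · refine mk_reachableSet_le hκ ?_ fun x => mk_range_le.trans (hB _)
    simpa using one_le_aleph0.trans hκ
end

section
/- Let C be a locally small category with all small colimits admitting a dense functor G : D ⥤ C from a small category, i.e. for every object A of C the canonical cocone with apex A on the diagram CostructuredArrow.proj G A ⋙ G is a colimit cocone. Then for any objects M, N of C, the category of spans over (M, N) (objects: triples (P, p : P ⟶ M, q : P ⟶ N); morphisms: h : P ⟶ P' commuting with the legs) also admits a dense functor from a small category: namely, the small category of triples (d, f : G d ⟶ M, g : G d ⟶ N) (realizable as CostructuredArrow (G ⋙ Functor.diag C) (M, N)), mapped to spans by (d, f, g) ↦ (G d, f, g), is dense in the category of spans over (M, N). -/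
open CategoryTheory CategoryTheory.Limits

universe v₁ v₂ u₁ u₂ v u

/-- The canonical cocone with apex `A` on the diagram `CostructuredArrow.proj G A ⋙ G`,
whose component at `(d, f : G d ⟶ A)` is `f` itself. -/
@[simps]
def canonicalCocone {D : Type u₁} [Category.{v₁} D] {C : Type u₂} [Category.{v₂} C]
    (G : D ⥤ C) (A : C) : Cocone (CostructuredArrow.proj G A ⋙ G) where
  pt := A
  ι :=
    { app := fun f => f.hom
      naturality := fun f g m => by simp; exact (CostructuredArrow.w m).trans (Category.comp_id _).symm }

namespace DenseSpansAux

variable {C : Type u} [Category.{v} C] {D : Type v} [SmallCategory D] (G : D ⥤ C)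
  (M N : C) (A : CostructuredArrow (Functor.diag C) (M, N))

/-- The comparison functor from the costructured arrow category over `A.left`
to the costructured arrow category over `A` for the span-level functor. -/
@[simps]
def Phi : CostructuredArrow G A.left ⥤
    CostructuredArrow (CostructuredArrow.pre G (Functor.diag C) (M, N)) A where
  obj k := CostructuredArrow.mk
    (Y := CostructuredArrow.mk (S := G ⋙ Functor.diag C)
      ((Functor.diag C).map k.hom ≫ A.hom))
    (CostructuredArrow.homMk k.hom rfl)
  map {k k'} m := CostructuredArrow.homMk
    (CostructuredArrow.homMk m.left
      (by
        dsimp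
        rw [← Category.assoc, CostructuredArrow.w m, ← Category.assoc,
          CostructuredArrow.w m]))
    (by
      apply CostructuredArrow.hom_ext
      simp)

instance Phi_faithful : (Phi G M N A).Faithful where
  map_injective {k k'} m₁ m₂ h := by
    apply CostructuredArrow.hom_ext
    have := congrArg (fun u => CommaMorphism.left (CommaMorphism.left u)) h
    simp at this
    exact this

instance Phi_full : (Phi G M N A).Full where
  map_surjective {k k'} u := by
    obtain ⟨⟨g, gr, gw⟩, ur, uw⟩ := u
    have hw := congrArg (fun t => (CostructuredArrow.proj (Functor.diag C) (M, N)).map t) uw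
    refine ⟨CostructuredArrow.homMk g (by simp at hw; exact hw), ?_⟩
    apply CostructuredArrow.hom_ext
    apply CostructuredArrow.hom_ext
    simp
    rfl

instance Phi_essSurj : (Phi G M N A).EssSurj where
  mem_essImage j := by
    refine ⟨CostructuredArrow.mk j.hom.left, ⟨CostructuredArrow.isoMk
      (CostructuredArrow.isoMk (Iso.refl _) ?_) ?_⟩⟩
    · have := CostructuredArrow.w j.hom
      dsimp at this ⊢
      show (G ⋙ Functor.diag C).map (𝟙 _) ≫ j.left.hom = (Functor.diag C).map j.hom.left ≫ A.hom
      rw [CategoryTheory.Functor.map_id, Category.id_comp]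
      exact (CostructuredArrow.w j.hom).symm
    · apply CostructuredArrow.hom_ext
      show G.map (𝟙 _) ≫ j.hom.left = j.hom.left
      simp

instance Phi_isEquivalence : (Phi G M N A).IsEquivalence := {}

variable {G M N A} in
/-- Underlying cocone in `C` of a cocone in the span category. -/
@[simps]
def coconeQ
    (s : Cocone (Phi G M N A ⋙
      (CostructuredArrow.proj (CostructuredArrow.pre G (Functor.diag C) (M, N)) A ⋙
        CostructuredArrow.pre G (Functor.diag C) (M, N)))) :
    Cocone (CostructuredArrow.proj G A.left ⋙ G) where
  pt := s.pt.left
  ι :=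
    { app := fun k => (s.ι.app k).left
      naturality := fun k k' m => by
        have := congrArg CommaMorphism.left (s.ι.naturality m)
        simp at this
        refine Eq.trans ?_ (Category.comp_id _).symm
        exact this }

variable {G M N A} in
/-- The whiskered canonical cocone is a colimit. -/
noncomputable def isColimitAux (hP : IsColimit (canonicalCocone G A.left)) :
    IsColimit ((canonicalCocone (CostructuredArrow.pre G (Functor.diag C) (M, N)) A).whisker
      (Phi G M N A)) where
  desc s := CostructuredArrow.homMk (hP.desc (coconeQ s)) (by
    have e1 : hP.desc (coconeQ s) ≫ s.pt.hom.1 = A.hom.1 := by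
      apply hP.hom_ext
      intro k
      have h := congrArg Prod.fst (CostructuredArrow.w (s.ι.app k))
      have hf := hP.fac (coconeQ s) k
      dsimp at h hf ⊢
      erw [← Category.assoc, hf]
      exact h
    have e2 : hP.desc (coconeQ s) ≫ s.pt.hom.2 = A.hom.2 := by
      apply hP.hom_ext
      intro k
      have h := congrArg Prod.snd (CostructuredArrow.w (s.ι.app k))
      have hf := hP.fac (coconeQ s) k
      dsimp at h hf ⊢
      erw [← Category.assoc, hf]
      exact h
    dsimp
    exact Prod.ext e1 e2)
  fac s k := by
    apply CostructuredArrow.hom_ext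
    exact hP.fac (coconeQ s) k
  uniq s m hm := by
    apply CostructuredArrow.hom_ext
    show m.left = hP.desc (coconeQ s)
    refine hP.uniq (coconeQ s) m.left fun k => ?_
    have := congrArg CommaMorphism.left (hm k)
    exact this

end DenseSpansAux

theorem dense_functor_into_spans
    {C : Type u} [Category.{v} C] [HasColimits C]
    {D : Type v} [SmallCategory D] (G : D ⥤ C)
    -- `G` is dense:
    (hdense : ∀ A : C, Nonempty (IsColimit (canonicalCocone G A)))
    (M N : C) :
    -- the functor `(d, f, g) ↦ (G d, f, g)` into the category of spans over `(M, N)`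
    -- is dense:
    ∀ A : CostructuredArrow (Functor.diag C) (M, N),
      Nonempty (IsColimit
        (canonicalCocone (CostructuredArrow.pre G (Functor.diag C) (M, N)) A)) := by
  intro A
  obtain ⟨hP⟩ := hdense A.left
  exact ⟨IsColimit.ofWhiskerEquivalence (DenseSpansAux.Phi G M N A).asEquivalence
    (DenseSpansAux.isColimitAux hP)⟩
end
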